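/- For every n-qubit state ψ with n ≥ 2, the Schmidt-rank width satisfies χ_wd(ψ) ≤ max over all nonempty proper intervals I = {i : a ≤ i ≤ b} of Fin n of log₂ χ_{I, Iᶜ}(ψ). In particular, any family of states on 1D chains for which the Schmidt rank across every contiguous block of qubits is bounded by a constant has bounded Schmidt-rank width. -/

import Mathlib

open scoped BigOperators Classical

noncomputable section

/-- The Schmidt rank `χ_{A,Aᶜ}(ψ)` of a state across the bipartition `(A, Aᶜ)`:
the rank over `ℂ` of the matrix indexed by `(u : A → Bool) × (v : Aᶜ → Bool)`
whose entries are the amplitudes of the strings agreeing with `u` on `A` and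
with `v` on `Aᶜ`. -/
def schmidtRank {V : Type} [Fintype V] [DecidableEq V]
    (ψ : (V → Bool) → ℂ) (A : Set V) : ℕ :=
  Matrix.rank (Matrix.of fun (u : ↥A → Bool) (v : ↥Aᶜ → Bool) =>
    ψ fun i => if h : i ∈ A then u ⟨i, h⟩ else v ⟨i, h⟩)

/-- The degree of a vertex: the number of its neighbors. -/
def deg {M : ℕ} (T : SimpleGraph (Fin M)) (v : Fin M) : ℕ :=
  (T.neighborSet v).ncard

/-- A subcubic tree: a finite tree in which every vertex has degree 1 or 3. -/
def IsSubcubicTree {M : ℕ} (T : SimpleGraph (Fin M)) : Prop :=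
  T.IsTree ∧ ∀ v, deg T v = 1 ∨ deg T v = 3

/-- The set of qubits (vertices) lying in the connected component of the endpoint
`w` of the deleted edge `e` of the tree `T`, transported to `V` along the leaf
labeling `ℓ`. -/
def leafSide {M : ℕ} (T : SimpleGraph (Fin M)) {V : Type}
    (ℓ : {v : Fin M // deg T v = 1} ≃ V) (e : Sym2 (Fin M)) (w : Fin M) : Set V :=
  {i : V | ∃ l : {v : Fin M // deg T v = 1},
      (T.deleteEdges {e}).Reachable w l.val ∧ ℓ l = i}

/-- The Schmidt-rank width `χ_wd(ψ)`: the minimum over all subcubic trees `T`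
whose leaves are identified with the qubits of the maximum over the edges `e` of
`T` of `log₂ χ_{A_T^e, B_T^e}(ψ)`, where `(A_T^e, B_T^e)` is the bipartition of
the qubits induced by deleting `e` from `T`. -/
def chiWidth {V : Type} [Fintype V] [DecidableEq V] (ψ : (V → Bool) → ℂ) : ℝ :=
  sInf { r : ℝ | ∃ (M : ℕ) (T : SimpleGraph (Fin M)), IsSubcubicTree T ∧
    ∃ ℓ : {v : Fin M // deg T v = 1} ≃ V,
      r = sSup { s : ℝ | ∃ e ∈ T.edgeSet, ∃ w, w ∈ e ∧
        s = Real.logb 2 (schmidtRank ψ (leafSide T ℓ e w)) } }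

/-- Normalization: `Σ_x ‖φ x‖² = 1`. -/
def IsNormalized {n : ℕ} (φ : (Fin n → Bool) → ℂ) : Prop :=
  ∑ x : Fin n → Bool, ‖φ x‖ ^ 2 = 1

-- helpers
lemma nat_logb_nonneg (k : ℕ) : 0 ≤ Real.logb 2 (k : ℝ) := by
  rcases Nat.eq_zero_or_pos k with h | h
  · simp [h]
  · exact Real.logb_nonneg one_lt_two (by exact_mod_cast h)

lemma rank_submatrix_equiv {m n k l : Type} [Fintype n] [Fintype l] [Fintype m] [Fintype k]
    (A : Matrix m n ℂ) (e₁ : k ≃ m) (e₂ : l ≃ n) :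
    (A.submatrix e₁ e₂).rank = A.rank := by
  rw [Matrix.rank, Matrix.rank, Matrix.mulVecLin_submatrix,
    show LinearMap.funLeft ℂ ℂ ⇑e₁ = (LinearEquiv.funCongrLeft ℂ ℂ e₁ : (m → ℂ) →ₗ[ℂ] (k → ℂ)) from rfl,
    show LinearMap.funLeft ℂ ℂ ⇑e₂.symm = (LinearEquiv.funCongrLeft ℂ ℂ e₂.symm : (l → ℂ) →ₗ[ℂ] (n → ℂ)) from rfl,
    LinearMap.range_comp, LinearMap.range_comp_of_range_eq_top _ (LinearEquiv.range _),
    LinearEquiv.finrank_map_eq]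

lemma rank_of_flip_aux {a b c : Type} [Fintype a] [Fintype b] [Fintype c]
    (N : Matrix a b ℂ) (P : Matrix b c ℂ) (f : c ≃ a)
    (h : ∀ u v, P u v = N (f v) u) : P.rank = N.rank := by
  have hP : P = (Matrix.transpose N).submatrix (Equiv.refl b) f := by
    ext u v
    simpa using h u v
  rw [hP, rank_submatrix_equiv, Matrix.rank_transpose]

lemma rank_of_flip {a b c : Type} (ia : Fintype a) (ib : Fintype b) (ic : Fintype c)
    (N : Matrix a b ℂ) (P : Matrix b c ℂ) (f : c ≃ a)
    (h : ∀ u v, P u v = N (f v) u) :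
    @Matrix.rank _ _ _ ic _ P = @Matrix.rank _ _ _ ib _ N :=
  @rank_of_flip_aux a b c ia ib ic N P f h

lemma schmidtRank_compl {V : Type} [Fintype V] [DecidableEq V] (ψ : (V → Bool) → ℂ)
    (A : Set V) : schmidtRank ψ Aᶜ = schmidtRank ψ A := by
  refine rank_of_flip inferInstance _ _ _ _
    (Equiv.arrowCongr (Equiv.setCongr (compl_compl A)) (Equiv.refl Bool)) ?_
  intro u v
  simp only [Matrix.of_apply]
  congr 1
  funext i
  by_cases hi : i ∈ A
  · rw [dif_neg (by simpa using hi), dif_pos hi]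
    apply congrArg
    exact Subtype.ext rfl
  · rw [dif_pos (show i ∈ Aᶜ from hi), dif_neg hi]


lemma reach_iff_of_invariant {V : Type*} {G : SimpleGraph V} (f : V → Prop)
    (h : ∀ a b : V, G.Adj a b → (f a ↔ f b)) {a b : V} (hr : G.Reachable a b) :
    f a ↔ f b := by
  obtain ⟨w⟩ := hr
  induction w with
  | nil => exact Iff.rfl
  | cons ha _ ih => exact (h _ _ ha).trans ih

lemma key {n : ℕ} (hn : 2 ≤ n) (ψ : (Fin n → Bool) → ℂ)
    (M : ℕ) (T : SimpleGraph (Fin M)) (hT : IsSubcubicTree T)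
    (ℓ : {v : Fin M // deg T v = 1} ≃ Fin n)
    (hsides : ∀ e ∈ T.edgeSet, ∀ w ∈ e, ∃ a b : Fin n, a ≤ b ∧ Set.Icc a b ≠ Set.univ ∧
        (leafSide T ℓ e w = Set.Icc a b ∨ leafSide T ℓ e w = (Set.Icc a b)ᶜ)) :
    chiWidth ψ ≤ sSup { r : ℝ | ∃ a b : Fin n, a ≤ b ∧ Set.Icc a b ≠ Set.univ ∧
        r = Real.logb 2 (schmidtRank ψ (Set.Icc a b)) } := by
  set R : Set ℝ := { r : ℝ | ∃ a b : Fin n, a ≤ b ∧ Set.Icc a b ≠ Set.univ ∧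
        r = Real.logb 2 (schmidtRank ψ (Set.Icc a b)) } with hRdef
  have hRbdd : BddAbove R := by
    apply Set.Finite.bddAbove
    apply Set.Finite.subset (Set.finite_range
      (fun p : Fin n × Fin n => Real.logb 2 (schmidtRank ψ (Set.Icc p.1 p.2))))
    rintro r ⟨a, b, _, _, rfl⟩
    exact ⟨(a, b), rfl⟩
  have hRne : R.Nonempty := by
    refine ⟨_, ⟨⟨0, by omega⟩, ⟨0, by omega⟩, le_refl _, ?_, rfl⟩⟩
    intro hcontr
    have h1 : (⟨1, by omega⟩ : Fin n) ∈ Set.Icc (⟨0, by omega⟩ : Fin n) ⟨0, by omega⟩ := by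
      rw [hcontr]; exact Set.mem_univ _
    have := h1.2
    rw [Fin.le_def] at this
    simp at this
  have hRpos : 0 ≤ sSup R := by
    obtain ⟨r, hr⟩ := hRne
    refine le_trans ?_ (le_csSup hRbdd hr)
    obtain ⟨a, b, _, _, rfl⟩ := hr
    exact nat_logb_nonneg _
  have hbdd : BddBelow { r : ℝ | ∃ (M : ℕ) (T : SimpleGraph (Fin M)), IsSubcubicTree T ∧
    ∃ ℓ : {v : Fin M // deg T v = 1} ≃ Fin n,
      r = sSup { s : ℝ | ∃ e ∈ T.edgeSet, ∃ w, w ∈ e ∧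
        s = Real.logb 2 (schmidtRank ψ (leafSide T ℓ e w)) } } := by
    refine ⟨0, ?_⟩
    rintro x ⟨M', T', hT', ℓ', rfl⟩
    apply Real.sSup_nonneg
    rintro s ⟨e, he, w, hw, rfl⟩
    exact nat_logb_nonneg _
  have hmem : sSup { s : ℝ | ∃ e ∈ T.edgeSet, ∃ w, w ∈ e ∧
        s = Real.logb 2 (schmidtRank ψ (leafSide T ℓ e w)) } ∈
      { r : ℝ | ∃ (M : ℕ) (T : SimpleGraph (Fin M)), IsSubcubicTree T ∧
        ∃ ℓ : {v : Fin M // deg T v = 1} ≃ Fin n,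
          r = sSup { s : ℝ | ∃ e ∈ T.edgeSet, ∃ w, w ∈ e ∧
            s = Real.logb 2 (schmidtRank ψ (leafSide T ℓ e w)) } } :=
    ⟨M, T, hT, ℓ, rfl⟩
  refine le_trans (csInf_le hbdd hmem) ?_
  apply Real.sSup_le _ hRpos
  rintro s ⟨e, he, w, hw, rfl⟩
  obtain ⟨a, b, hab, hne, hcase⟩ := hsides e he w hw
  rcases hcase with hcase | hcase
  · rw [hcase]
    exact le_csSup hRbdd ⟨a, b, hab, hne, rfl⟩
  · rw [hcase, schmidtRank_compl]
    exact le_csSup hRbdd ⟨a, b, hab, hne, rfl⟩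

-- ### the two-qubit tree
lemma deg_top2 (v : Fin 2) : deg (⊤ : SimpleGraph (Fin 2)) v = 1 := by
  have h : (⊤ : SimpleGraph (Fin 2)).neighborSet v = {(⟨1 - v.val, by omega⟩ : Fin 2)} := by
    ext w
    have hv := v.isLt; have hw := w.isLt
    simp only [SimpleGraph.mem_neighborSet, SimpleGraph.top_adj, ne_eq, Set.mem_singleton_iff,
      Fin.ext_iff]
    omega
  rw [deg, h, Set.ncard_singleton]

lemma sym2_fin2 (a b v w : Fin 2) (hab : a ≠ b) (hvw : v ≠ w) :
    s(a, b) = s(v, w) := by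
  rw [Sym2.eq_iff]
  have ha := a.isLt; have hb := b.isLt; have hv := v.isLt; have hw := w.isLt
  rw [ne_eq, Fin.ext_iff] at hab hvw
  simp only [Fin.ext_iff]
  omega

lemma no_edges2 (v w : Fin 2) (hvw : v ≠ w) (a b : Fin 2) :
    ¬ ((⊤ : SimpleGraph (Fin 2)).deleteEdges {s(v, w)}).Adj a b := by
  rw [SimpleGraph.deleteEdges_adj]
  rintro ⟨hab, hne⟩
  exact hne (sym2_fin2 a b v w hab.ne hvw)

lemma reach2 (v w : Fin 2) (hvw : v ≠ w) (x y : Fin 2)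
    (h : ((⊤ : SimpleGraph (Fin 2)).deleteEdges {s(v, w)}).Reachable x y) : x = y := by
  have := reach_iff_of_invariant (G := (⊤ : SimpleGraph (Fin 2)).deleteEdges {s(v, w)})
    (fun z => z = x) (by intro a b hab; exact absurd hab (no_edges2 v w hvw a b)) h
  exact (this.mp rfl).symm

lemma subcubic2 : IsSubcubicTree (⊤ : SimpleGraph (Fin 2)) := by
  constructor
  · constructor
    · constructor
      intro a b
      by_cases hab : a = b
      · exact hab ▸ SimpleGraph.Reachable.refl a
      · exact SimpleGraph.Adj.reachable (by simpa using hab)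
    · rw [SimpleGraph.isAcyclic_iff_forall_adj_isBridge]
      intro v w hvw
      rw [SimpleGraph.isBridge_iff]
      refine fun hr => ?_
      exact hvw.ne (reach2 v w hvw.ne v w hr)
  · intro v
    exact Or.inl (deg_top2 v)

def ell2 : {v : Fin 2 // deg (⊤ : SimpleGraph (Fin 2)) v = 1} ≃ Fin 2 where
  toFun l := l.val
  invFun i := ⟨i, deg_top2 i⟩
  left_inv l := Subtype.ext rfl
  right_inv i := rfl

lemma sides2 : ∀ e ∈ (⊤ : SimpleGraph (Fin 2)).edgeSet, ∀ w ∈ e,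
    ∃ a b : Fin 2, a ≤ b ∧ Set.Icc a b ≠ Set.univ ∧
      (leafSide (⊤ : SimpleGraph (Fin 2)) ell2 e w = Set.Icc a b ∨
       leafSide (⊤ : SimpleGraph (Fin 2)) ell2 e w = (Set.Icc a b)ᶜ) := by
  intro e he w hw
  induction e using Sym2.ind with
  | _ x y =>
  rw [SimpleGraph.mem_edgeSet] at he
  refine ⟨w, w, le_refl _, ?_, Or.inl ?_⟩
  · intro hcontr
    have h1 : (⟨1 - w.val, by omega⟩ : Fin 2) ∈ Set.Icc w w := by
      rw [hcontr]; exact Set.mem_univ _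
    rw [Set.Icc_self, Set.mem_singleton_iff] at h1
    have h2 : 1 - w.val = w.val := congrArg Fin.val h1
    have := w.isLt
    omega
  · ext i
    simp only [leafSide, Set.mem_setOf_eq, Set.Icc_self, Set.mem_singleton_iff]
    constructor
    · rintro ⟨l, hreach, rfl⟩
      have := reach2 x y he.ne w l.val hreach
      exact this.symm
    · intro h
      exact ⟨⟨w, deg_top2 w⟩, SimpleGraph.Reachable.refl _, h.symm⟩

-- ### the caterpillar tree (n ≥ 3)
def catRel (n x y : ℕ) : Prop :=
  (x = 0 ∧ y = n) ∨ (1 ≤ x ∧ x ≤ n - 2 ∧ y = n + x - 1) ∨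
  (x = n - 1 ∧ y = 2 * n - 3) ∨ (n ≤ x ∧ y = x + 1 ∧ y ≤ 2 * n - 3)

def cat (n : ℕ) : SimpleGraph (Fin (2 * n - 2)) where
  Adj a b := a ≠ b ∧ (catRel n a.val b.val ∨ catRel n b.val a.val)
  symm := ⟨by rintro a b ⟨h1, h2⟩; exact ⟨h1.symm, h2.symm⟩⟩
  loopless := ⟨fun a h => h.1 rfl⟩

lemma cat_adj {n : ℕ} {a b : Fin (2 * n - 2)} :
    (cat n).Adj a b ↔ a.val ≠ b.val ∧ (catRel n a.val b.val ∨ catRel n b.val a.val) := by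
  show (a ≠ b ∧ _) ↔ _
  rw [ne_eq, Fin.ext_iff]

lemma adj_of_rel {n : ℕ} {a b : Fin (2 * n - 2)} (hn : 3 ≤ n)
    (h : catRel n a.val b.val) : (cat n).Adj a b := by
  rw [cat_adj]
  refine ⟨?_, Or.inl h⟩
  unfold catRel at h
  omega

lemma sym2_ne {m : ℕ} {x y a b : Fin m}
    (h : ¬((x.val = a.val ∧ y.val = b.val) ∨ (x.val = b.val ∧ y.val = a.val))) :
    s(x, y) ∉ ({s(a, b)} : Set (Sym2 (Fin m))) := by
  rw [Set.mem_singleton_iff, Sym2.eq_iff]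
  rintro (⟨h1, h2⟩ | ⟨h1, h2⟩)
  · exact h (Or.inl ⟨congrArg Fin.val h1, congrArg Fin.val h2⟩)
  · exact h (Or.inr ⟨congrArg Fin.val h1, congrArg Fin.val h2⟩)

lemma sym2_ne' {m : ℕ} {x y a b : Fin m}
    (h : s(x, y) ∉ ({s(a, b)} : Set (Sym2 (Fin m)))) :
    ¬((x.val = a.val ∧ y.val = b.val) ∨ (x.val = b.val ∧ y.val = a.val)) := by
  rintro (⟨h1, h2⟩ | ⟨h1, h2⟩) <;> apply h <;> rw [Set.mem_singleton_iff, Sym2.eq_iff]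
  · exact Or.inl ⟨Fin.ext h1, Fin.ext h2⟩
  · exact Or.inr ⟨Fin.ext h1, Fin.ext h2⟩

lemma ncard_triple {m : ℕ} (a b c : Fin m) (hab : a ≠ b) (hac : a ≠ c) (hbc : b ≠ c) :
    ({a, b, c} : Set (Fin m)).ncard = 3 := by
  rw [Set.ncard_insert_of_notMem (by simp [hab, hac]) (Set.toFinite _),
    Set.ncard_insert_of_notMem (by simp [hbc]) (Set.toFinite _), Set.ncard_singleton]

lemma leaf_att {n : ℕ} (hn : 3 ≤ n) (x : Fin (2 * n - 2)) (hx : x.val < n) :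
    ∃ t : Fin (2 * n - 2), (cat n).neighborSet x = {t} ∧ n ≤ t.val ∧ t.val ≤ 2 * n - 3 ∧
      ((x.val = 0 ∧ t.val = n) ∨ (1 ≤ x.val ∧ x.val ≤ n - 2 ∧ t.val = n + x.val - 1) ∨
        (x.val = n - 1 ∧ t.val = 2 * n - 3)) := by
  by_cases h0 : x.val = 0
  · refine ⟨⟨n, by omega⟩, ?_, by simp only [Fin.val_mk]; omega, by simp only [Fin.val_mk]; omega, Or.inl ⟨h0, rfl⟩⟩
    ext b
    have hb := b.isLt
    rw [SimpleGraph.mem_neighborSet, cat_adj]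
    simp only [catRel, Set.mem_singleton_iff, Fin.ext_iff, Fin.val_mk]
    omega
  · by_cases h1 : x.val ≤ n - 2
    · refine ⟨⟨n + x.val - 1, by omega⟩, ?_, by simp only [Fin.val_mk]; omega,
        by simp only [Fin.val_mk]; omega, Or.inr (Or.inl ⟨by omega, h1, rfl⟩)⟩
      ext b
      have hb := b.isLt
      rw [SimpleGraph.mem_neighborSet, cat_adj]
      simp only [catRel, Set.mem_singleton_iff, Fin.ext_iff, Fin.val_mk]
      omega
    · refine ⟨⟨2 * n - 3, by omega⟩, ?_, by simp only [Fin.val_mk]; omega,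
        by simp only [Fin.val_mk]; omega, Or.inr (Or.inr ⟨by omega, rfl⟩)⟩
      ext b
      have hb := b.isLt
      rw [SimpleGraph.mem_neighborSet, cat_adj]
      simp only [catRel, Set.mem_singleton_iff, Fin.ext_iff, Fin.val_mk]
      omega

lemma deg_leaf {n : ℕ} (hn : 3 ≤ n) (x : Fin (2 * n - 2)) (hx : x.val < n) :
    deg (cat n) x = 1 := by
  obtain ⟨t, ht, -⟩ := leaf_att hn x hx
  rw [deg, ht, Set.ncard_singleton]

set_option maxHeartbeats 1000000 in
lemma nb_spine {n : ℕ} (hn : 3 ≤ n) (x : Fin (2 * n - 2)) (hx : n ≤ x.val) :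
    ∃ p q r : Fin (2 * n - 2), p.val ≠ q.val ∧ p.val ≠ r.val ∧ q.val ≠ r.val ∧
      (cat n).neighborSet x = {p, q, r} := by
  have hxlt := x.isLt
  by_cases hA : x.val = n <;> by_cases hB : x.val = 2 * n - 3
  · refine ⟨⟨0, by omega⟩, ⟨x.val - n + 1, by omega⟩, ⟨n - 1, by omega⟩,
      by simp only [Fin.val_mk]; omega, by simp only [Fin.val_mk]; omega,
      by simp only [Fin.val_mk]; omega, ?_⟩
    ext b
    have hb := b.isLt
    rw [SimpleGraph.mem_neighborSet, cat_adj]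
    simp only [catRel, Set.mem_insert_iff, Set.mem_singleton_iff, Fin.ext_iff, Fin.val_mk]
    omega
  · refine ⟨⟨0, by omega⟩, ⟨x.val - n + 1, by omega⟩, ⟨x.val + 1, by omega⟩,
      by simp only [Fin.val_mk]; omega, by simp only [Fin.val_mk]; omega,
      by simp only [Fin.val_mk]; omega, ?_⟩
    ext b
    have hb := b.isLt
    rw [SimpleGraph.mem_neighborSet, cat_adj]
    simp only [catRel, Set.mem_insert_iff, Set.mem_singleton_iff, Fin.ext_iff, Fin.val_mk]
    omega
  · refine ⟨⟨x.val - 1, by omega⟩, ⟨x.val - n + 1, by omega⟩, ⟨n - 1, by omega⟩,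
      by simp only [Fin.val_mk]; omega, by simp only [Fin.val_mk]; omega,
      by simp only [Fin.val_mk]; omega, ?_⟩
    ext b
    have hb := b.isLt
    rw [SimpleGraph.mem_neighborSet, cat_adj]
    simp only [catRel, Set.mem_insert_iff, Set.mem_singleton_iff, Fin.ext_iff, Fin.val_mk]
    omega
  · refine ⟨⟨x.val - 1, by omega⟩, ⟨x.val - n + 1, by omega⟩, ⟨x.val + 1, by omega⟩,
      by simp only [Fin.val_mk]; omega, by simp only [Fin.val_mk]; omega,
      by simp only [Fin.val_mk]; omega, ?_⟩
    ext b
    have hb := b.isLt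
    rw [SimpleGraph.mem_neighborSet, cat_adj]
    simp only [catRel, Set.mem_insert_iff, Set.mem_singleton_iff, Fin.ext_iff, Fin.val_mk]
    omega

lemma deg_spine {n : ℕ} (hn : 3 ≤ n) (x : Fin (2 * n - 2)) (hx : n ≤ x.val) :
    deg (cat n) x = 3 := by
  obtain ⟨p, q, r, h1, h2, h3, hset⟩ := nb_spine hn x hx
  rw [deg, hset]
  exact ncard_triple p q r (fun h => h1 (congrArg Fin.val h))
    (fun h => h2 (congrArg Fin.val h)) (fun h => h3 (congrArg Fin.val h))


lemma adj_del {n : ℕ} (hn : 3 ≤ n) {E : Set (Sym2 (Fin (2 * n - 2)))} {x y : Fin (2 * n - 2)}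
    (h : catRel n x.val y.val) (hE : s(x, y) ∉ E) : ((cat n).deleteEdges E).Adj x y := by
  rw [SimpleGraph.deleteEdges_adj]
  exact ⟨adj_of_rel hn h, hE⟩

lemma spine_seg {n : ℕ} (hn : 3 ≤ n) (E : Set (Sym2 (Fin (2 * n - 2))))
    (lo hi : ℕ) (hlo : n ≤ lo) (hhi : hi ≤ 2 * n - 3)
    (hE : ∀ u v : Fin (2 * n - 2), lo ≤ u.val → u.val + 1 = v.val → v.val ≤ hi → s(u, v) ∉ E) :
    ∀ s (h1 : lo ≤ s) (h2 : s ≤ hi),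
      ((cat n).deleteEdges E).Reachable ⟨lo, by omega⟩ ⟨s, by omega⟩ := by
  intro s
  induction s with
  | zero => intro h1 h2; exact absurd h1 (by omega)
  | succ k ih =>
    intro h1 h2
    by_cases hk : lo = k + 1
    · subst hk; exact SimpleGraph.Reachable.refl _
    · have hk1 : lo ≤ k := by omega
      refine (ih hk1 (by omega)).trans (SimpleGraph.Adj.reachable ?_)
      refine adj_del hn ?_ (hE _ _ (by simpa using hk1) (by simp) (by simpa using h2))
      simp only [Fin.val_mk]
      unfold catRel
      omega

lemma leaf_edge_comp {n : ℕ} (hn : 3 ≤ n) (L t : Fin (2 * n - 2)) (hL : L.val < n)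
    (hnb : (cat n).neighborSet L = {t}) (x : Fin (2 * n - 2))
    (hr : ((cat n).deleteEdges {s(L, t)}).Reachable L x) : x = L := by
  have inv : ∀ a b : Fin (2 * n - 2), ((cat n).deleteEdges {s(L, t)}).Adj a b →
      (a = L ↔ b = L) := by
    intro a b hab
    rw [SimpleGraph.deleteEdges_adj] at hab
    obtain ⟨hab, hne⟩ := hab
    constructor
    · rintro rfl
      exfalso
      have : b ∈ (cat n).neighborSet a := hab
      rw [hnb, Set.mem_singleton_iff] at this
      subst this
      exact hne rfl
    · rintro rfl
      exfalso
      have : a ∈ (cat n).neighborSet b := hab.symm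
      rw [hnb, Set.mem_singleton_iff] at this
      subst this
      exact hne (Sym2.eq_swap)
  exact (reach_iff_of_invariant (fun z => z = L) inv hr).mp rfl

lemma leaf_edge_reach {n : ℕ} (hn : 3 ≤ n) (L t : Fin (2 * n - 2)) (hL : L.val < n)
    (ht : n ≤ t.val) (x : Fin (2 * n - 2)) (hx : x ≠ L) :
    ((cat n).deleteEdges {s(L, t)}).Reachable t x := by
  have ht2 := t.isLt
  have hsp : ∀ y : Fin (2 * n - 2), n ≤ y.val →
      ((cat n).deleteEdges {s(L, t)}).Reachable ⟨n, by omega⟩ y := by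
    intro y hy
    have hy2 := y.isLt
    have := spine_seg hn {s(L, t)} n (2 * n - 3) (le_refl n) (le_refl _)
      (fun u v hu huv hv => sym2_ne (by have := u.isLt; omega)) y.val hy (by omega)
    convert this using 2
  by_cases hxl : x.val < n
  · -- x is a leaf different from L
    obtain ⟨t', hnb', ht'1, ht'2, -⟩ := leaf_att hn x hxl
    have hadj : (cat n).Adj x t' := by
      have : t' ∈ (cat n).neighborSet x := by rw [hnb']; rfl
      exact this.symm.symm
    have hne : s(x, t') ∉ ({s(L, t)} : Set (Sym2 (Fin (2 * n - 2)))) := by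
      apply sym2_ne
      rw [ne_eq, Fin.ext_iff] at hx
      omega
    have : ((cat n).deleteEdges {s(L, t)}).Adj x t' := by
      rw [SimpleGraph.deleteEdges_adj]
      exact ⟨hadj, hne⟩
    exact ((hsp t ht).symm.trans (hsp t' ht'1)).trans this.symm.reachable
  · exact (hsp t ht).symm.trans (hsp x (by omega))

lemma spine_edge_inv {n : ℕ} (hn : 3 ≤ n) (u v : Fin (2 * n - 2)) (hu : n ≤ u.val)
    (hv : v.val = u.val + 1) (hv2 : v.val ≤ 2 * n - 3) {x y : Fin (2 * n - 2)}
    (hr : ((cat n).deleteEdges {s(u, v)}).Reachable x y) :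
    (x.val ≤ u.val - n + 1 ∨ (n ≤ x.val ∧ x.val ≤ u.val)) ↔
      (y.val ≤ u.val - n + 1 ∨ (n ≤ y.val ∧ y.val ≤ u.val)) := by
  refine reach_iff_of_invariant
    (fun z => z.val ≤ u.val - n + 1 ∨ (n ≤ z.val ∧ z.val ≤ u.val)) ?_ hr
  intro a b hab
  rw [SimpleGraph.deleteEdges_adj, cat_adj] at hab
  obtain ⟨⟨hne, hrel⟩, hE⟩ := hab
  have hE' := sym2_ne' hE
  have ha := a.isLt
  have hb := b.isLt
  unfold catRel at hrel
  omega

lemma spine_edge_reach_left {n : ℕ} (hn : 3 ≤ n) (u v : Fin (2 * n - 2)) (hu : n ≤ u.val)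
    (hv : v.val = u.val + 1) (hv2 : v.val ≤ 2 * n - 3) (x : Fin (2 * n - 2))
    (hx : x.val ≤ u.val - n + 1 ∨ (n ≤ x.val ∧ x.val ≤ u.val)) :
    ((cat n).deleteEdges {s(u, v)}).Reachable u x := by
  have hu2 := u.isLt
  have hseg : ∀ y : Fin (2 * n - 2), n ≤ y.val → y.val ≤ u.val →
      ((cat n).deleteEdges {s(u, v)}).Reachable ⟨n, by omega⟩ y := by
    intro y hy1 hy2
    have := spine_seg hn {s(u, v)} n u.val (le_refl n) (by omega)
      (fun p q hp hpq hq => sym2_ne (by omega)) y.val hy1 hy2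
    convert this using 2
  have hru : ((cat n).deleteEdges {s(u, v)}).Reachable u ⟨n, by omega⟩ :=
    (hseg u hu (le_refl _)).symm
  rcases hx with hx | hx
  · -- x is a leaf with x.val ≤ u.val - n + 1
    have hxn : x.val < n := by omega
    obtain ⟨t, hnb, ht1, ht2, htf⟩ := leaf_att hn x hxn
    have htu : t.val ≤ u.val := by omega
    have hadj : (cat n).Adj x t := by
      have : t ∈ (cat n).neighborSet x := by rw [hnb]; rfl
      exact this
    have hne : s(t, x) ∉ ({s(u, v)} : Set (Sym2 (Fin (2 * n - 2)))) :=
      sym2_ne (by omega)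
    have hadj' : ((cat n).deleteEdges {s(u, v)}).Adj t x := by
      rw [SimpleGraph.deleteEdges_adj]
      exact ⟨hadj.symm, hne⟩
    exact (hru.trans (hseg t ht1 htu)).trans hadj'.reachable
  · exact hru.trans (hseg x hx.1 hx.2)

lemma spine_edge_reach_right {n : ℕ} (hn : 3 ≤ n) (u v : Fin (2 * n - 2)) (hu : n ≤ u.val)
    (hv : v.val = u.val + 1) (hv2 : v.val ≤ 2 * n - 3) (x : Fin (2 * n - 2))
    (hx : (u.val - n + 2 ≤ x.val ∧ x.val < n) ∨ (u.val + 1 ≤ x.val)) :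
    ((cat n).deleteEdges {s(u, v)}).Reachable v x := by
  have hu2 := u.isLt
  have hx2 := x.isLt
  have hseg : ∀ y : Fin (2 * n - 2), v.val ≤ y.val → y.val ≤ 2 * n - 3 →
      ((cat n).deleteEdges {s(u, v)}).Reachable ⟨v.val, by omega⟩ y := by
    intro y hy1 hy2
    have := spine_seg hn {s(u, v)} v.val (2 * n - 3) (by omega) (le_refl _)
      (fun p q hp hpq hq => sym2_ne (by omega)) y.val hy1 hy2
    convert this using 2
  have hvv : (⟨v.val, by omega⟩ : Fin (2 * n - 2)) = v := Fin.ext rfl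
  rcases hx with ⟨hx1, hxn⟩ | hx
  · obtain ⟨t, hnb, ht1, ht2, htf⟩ := leaf_att hn x hxn
    have htv : v.val ≤ t.val := by omega
    have hadj : (cat n).Adj x t := by
      have : t ∈ (cat n).neighborSet x := by rw [hnb]; rfl
      exact this
    have hne : s(t, x) ∉ ({s(u, v)} : Set (Sym2 (Fin (2 * n - 2)))) :=
      sym2_ne (by omega)
    have hadj' : ((cat n).deleteEdges {s(u, v)}).Adj t x := by
      rw [SimpleGraph.deleteEdges_adj]
      exact ⟨hadj.symm, hne⟩
    exact ((hvv ▸ hseg t htv ht2)).trans hadj'.reachable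
  · exact hvv ▸ hseg x (by omega) (by omega)

lemma cat_reach_base {n : ℕ} (hn : 3 ≤ n) (x : Fin (2 * n - 2)) :
    (cat n).Reachable x ⟨n, by omega⟩ := by
  have hsp : ∀ y : Fin (2 * n - 2), n ≤ y.val →
      ((cat n).deleteEdges ∅).Reachable ⟨n, by omega⟩ y := by
    intro y hy
    have hy2 := y.isLt
    have := spine_seg hn ∅ n (2 * n - 3) (le_refl n) (le_refl _)
      (fun u v hu huv hv => Set.notMem_empty _) y.val hy (by omega)
    convert this using 2
  rw [SimpleGraph.deleteEdges_empty] at hsp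
  by_cases hx : x.val < n
  · obtain ⟨t, hnb, ht1, ht2, -⟩ := leaf_att hn x hx
    have hadj : (cat n).Adj x t := by
      have : t ∈ (cat n).neighborSet x := by rw [hnb]; rfl
      exact this
    exact hadj.reachable.trans (hsp t ht1).symm
  · exact (hsp x (by omega)).symm

lemma cat_connected {n : ℕ} (hn : 3 ≤ n) : (cat n).Connected := by
  haveI : Nonempty (Fin (2 * n - 2)) := ⟨⟨0, by omega⟩⟩
  exact ⟨fun a b => (cat_reach_base hn a).trans (cat_reach_base hn b).symm⟩

lemma cat_bridge_aux {n : ℕ} (hn : 3 ≤ n) (a b : Fin (2 * n - 2))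
    (hrel : catRel n a.val b.val) :
    ¬ ((cat n).deleteEdges {s(a, b)}).Reachable a b := by
  have ha2 := a.isLt
  have hb2 := b.isLt
  intro hr
  by_cases hL : a.val < n
  · obtain ⟨t, hnb, ht1, ht2, -⟩ := leaf_att hn a hL
    have hbt : b = t := by
      have : b ∈ (cat n).neighborSet a := adj_of_rel hn hrel
      rwa [hnb, Set.mem_singleton_iff] at this
    subst hbt
    have := leaf_edge_comp hn a b hL hnb b hr
    rw [Fin.ext_iff] at this
    unfold catRel at hrel
    omega
  · have hu : n ≤ a.val := by omega
    have hv : b.val = a.val + 1 ∧ b.val ≤ 2 * n - 3 := by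
      unfold catRel at hrel
      omega
    have := spine_edge_inv hn a b hu hv.1 hv.2 hr
    omega

lemma cat_subcubic {n : ℕ} (hn : 3 ≤ n) : IsSubcubicTree (cat n) := by
  refine ⟨⟨cat_connected hn, ?_⟩, ?_⟩
  · rw [SimpleGraph.isAcyclic_iff_forall_adj_isBridge]
    intro a b hadj
    rw [SimpleGraph.isBridge_iff]
    show ¬ ((cat n).deleteEdges {s(a, b)}).Reachable a b
    rw [cat_adj] at hadj
    rcases hadj.2 with hrel | hrel
    · exact cat_bridge_aux hn a b hrel
    · intro hr
      exact cat_bridge_aux hn b a hrel (Sym2.eq_swap (a := a) ▸ hr.symm)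
  · intro v
    by_cases hv : v.val < n
    · exact Or.inl (deg_leaf hn v hv)
    · exact Or.inr (deg_spine hn v (by omega))

lemma deg_one_iff {n : ℕ} (hn : 3 ≤ n) (v : Fin (2 * n - 2)) :
    deg (cat n) v = 1 ↔ v.val < n := by
  constructor
  · intro h
    by_contra h'
    have := deg_spine hn v (by omega)
    omega
  · exact deg_leaf hn v

def ellcat (n : ℕ) (hn : 3 ≤ n) : {v : Fin (2 * n - 2) // deg (cat n) v = 1} ≃ Fin n where
  toFun l := ⟨l.val.val, (deg_one_iff hn l.val).mp l.prop⟩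
  invFun i := ⟨⟨i.val, by have := i.isLt; omega⟩, deg_leaf hn _ i.isLt⟩
  left_inv l := Subtype.ext (Fin.ext rfl)
  right_inv i := Fin.ext rfl

lemma icc_ne_univ {n : ℕ} (p q : Fin n) (m : ℕ) (hm : m < n)
    (hout : ¬(p.val ≤ m ∧ m ≤ q.val)) : Set.Icc p q ≠ Set.univ := by
  intro hc
  have h1 : (⟨m, hm⟩ : Fin n) ∈ Set.Icc p q := hc ▸ Set.mem_univ _
  rw [Set.mem_Icc, Fin.le_def, Fin.le_def] at h1
  exact hout ⟨h1.1, h1.2⟩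

lemma leafSide_eq {n : ℕ} (hn : 3 ≤ n) (e : Sym2 (Fin (2 * n - 2))) (w : Fin (2 * n - 2)) :
    leafSide (cat n) (ellcat n hn) e w
      = {i : Fin n | ((cat n).deleteEdges {e}).Reachable w ⟨i.val, by have := i.isLt; omega⟩} := by
  ext i
  simp only [leafSide, Set.mem_setOf_eq]
  constructor
  · rintro ⟨l, hrl, rfl⟩
    convert hrl using 2
    rfl
  · intro hr
    exact ⟨⟨⟨i.val, by have := i.isLt; omega⟩, deg_leaf hn _ i.isLt⟩, hr, Fin.ext rfl⟩

lemma cat_sides_main {n : ℕ} (hn : 3 ≤ n) (a b : Fin (2 * n - 2))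
    (hrel : catRel n a.val b.val) (w : Fin (2 * n - 2)) (hw : w = a ∨ w = b) :
    ∃ p q : Fin n, p ≤ q ∧ Set.Icc p q ≠ Set.univ ∧
      (leafSide (cat n) (ellcat n hn) s(a, b) w = Set.Icc p q ∨
       leafSide (cat n) (ellcat n hn) s(a, b) w = (Set.Icc p q)ᶜ) := by
  have ha2 := a.isLt
  have hb2 := b.isLt
  rw [leafSide_eq hn]
  by_cases hL : a.val < n
  · -- leaf edge: a is the leaf, b its attachment
    obtain ⟨t, hnb, ht1, ht2, -⟩ := leaf_att hn a hL
    have hbt : b = t := by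
      have : b ∈ (cat n).neighborSet a := adj_of_rel hn hrel
      rwa [hnb, Set.mem_singleton_iff] at this
    subst hbt
    refine ⟨⟨a.val, hL⟩, ⟨a.val, hL⟩, le_refl _, ?_, ?_⟩
    · by_cases h0 : a.val = 0
      · exact icc_ne_univ _ _ 1 (by omega) (by simp only [Fin.val_mk]; omega)
      · exact icc_ne_univ _ _ 0 (by omega) (by simp only [Fin.val_mk]; omega)
    rcases hw with rfl | rfl
    · -- w = a : the singleton side
      left
      ext i
      have hi := i.isLt
      simp only [Set.mem_setOf_eq, Set.mem_Icc, Fin.le_def, Fin.val_mk]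
      constructor
      · intro hr
        have := leaf_edge_comp hn _ _ hL hnb _ hr
        rw [Fin.ext_iff] at this
        simp only [Fin.val_mk] at this
        omega
      · intro hle
        have heq : (⟨i.val, by omega⟩ : Fin (2 * n - 2)) = w :=
          Fin.ext (by simp only [Fin.val_mk]; omega)
        rw [heq]
    · -- w = t : the complement side
      right
      ext i
      have hi := i.isLt
      simp only [Set.mem_setOf_eq, Set.mem_compl_iff, Set.mem_Icc, Fin.le_def, Fin.val_mk]
      constructor
      · intro hr hia
        have heq : (⟨i.val, by omega⟩ : Fin (2 * n - 2)) = a := Fin.ext (by simp only [Fin.val_mk]; omega)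
        rw [heq] at hr
        have := leaf_edge_comp hn a w hL hnb w hr.symm
        rw [Fin.ext_iff] at this
        omega
      · intro hia
        refine leaf_edge_reach hn a w hL ht1 _ ?_
        intro hc
        rw [Fin.ext_iff] at hc
        simp only [Fin.val_mk] at hc
        omega
  · -- spine edge
    have hu : n ≤ a.val := by omega
    have hv : b.val = a.val + 1 ∧ b.val ≤ 2 * n - 3 := by
      unfold catRel at hrel
      omega
    rcases hw with rfl | rfl
    · refine ⟨⟨0, by omega⟩, ⟨w.val - n + 1, by omega⟩, by rw [Fin.le_def]; simp only [Fin.val_mk]; omega,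
        icc_ne_univ _ _ (n - 1) (by omega) (by simp only [Fin.val_mk]; omega), Or.inl ?_⟩
      ext i
      have hi := i.isLt
      simp only [Set.mem_setOf_eq, Set.mem_Icc, Fin.le_def, Fin.val_mk]
      constructor
      · intro hr
        have := spine_edge_inv hn w b hu hv.1 hv.2 hr
        simp only [Fin.val_mk] at this
        omega
      · intro hle
        exact spine_edge_reach_left hn w b hu hv.1 hv.2 _ (by simp only [Fin.val_mk]; omega)
    · refine ⟨⟨a.val - n + 2, by omega⟩, ⟨n - 1, by omega⟩, by rw [Fin.le_def]; simp only [Fin.val_mk]; omega,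
        icc_ne_univ _ _ 0 (by omega) (by simp only [Fin.val_mk]; omega), Or.inl ?_⟩
      ext i
      have hi := i.isLt
      simp only [Set.mem_setOf_eq, Set.mem_Icc, Fin.le_def, Fin.val_mk]
      constructor
      · intro hr
        have := spine_edge_inv hn a w hu hv.1 hv.2 hr
        simp only [Fin.val_mk] at this
        omega
      · intro hle
        exact spine_edge_reach_right hn a w hu hv.1 hv.2 _ (by simp only [Fin.val_mk]; omega)

lemma cat_sides {n : ℕ} (hn : 3 ≤ n) : ∀ e ∈ (cat n).edgeSet, ∀ w ∈ e,
    ∃ p q : Fin n, p ≤ q ∧ Set.Icc p q ≠ Set.univ ∧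
      (leafSide (cat n) (ellcat n hn) e w = Set.Icc p q ∨
       leafSide (cat n) (ellcat n hn) e w = (Set.Icc p q)ᶜ) := by
  intro e he w hw
  induction e using Sym2.ind with
  | _ a b =>
  rw [SimpleGraph.mem_edgeSet, cat_adj] at he
  rw [Sym2.mem_iff] at hw
  rcases he.2 with hrel | hrel
  · exact cat_sides_main hn a b hrel w hw
  · rw [show s(a, b) = s(b, a) from Sym2.eq_swap]
    exact cat_sides_main hn b a hrel w hw.symm

lemma interval_bound {n : ℕ} (hn : 2 ≤ n) (ψ : (Fin n → Bool) → ℂ) :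
    chiWidth ψ ≤ sSup { r : ℝ | ∃ a b : Fin n, a ≤ b ∧ Set.Icc a b ≠ Set.univ ∧
        r = Real.logb 2 (schmidtRank ψ (Set.Icc a b)) } := by
  rcases Nat.lt_or_ge n 3 with h3 | h3
  · have h2 : n = 2 := by omega
    subst h2
    exact key (le_refl 2) ψ 2 ⊤ subcubic2 ell2 sides2
  · exact key hn ψ (2 * n - 2) (cat n) (cat_subcubic h3) (ellcat n h3) (cat_sides h3)


/-- For every `n`-qubit state `ψ` with `n ≥ 2`, the Schmidt-rank width satisfies
`χ_wd(ψ) ≤ max over all nonempty proper intervals I of Fin n of log₂ χ_{I,Iᶜ}(ψ)`.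
In particular, any family of states on 1D chains for which the Schmidt rank across
every contiguous block of qubits is bounded by a constant has bounded Schmidt-rank
width. -/
theorem chiWidth_le_interval_bound (n : ℕ) (hn : 2 ≤ n)
    (ψ : (Fin n → Bool) → ℂ) (hψ : IsNormalized ψ) :
    chiWidth ψ ≤ sSup { r : ℝ | ∃ a b : Fin n, a ≤ b ∧ Set.Icc a b ≠ Set.univ ∧
        r = Real.logb 2 (schmidtRank ψ (Set.Icc a b)) } ∧
    ∀ (ψfam : (m : ℕ) → (Fin m → Bool) → ℂ) (c : ℕ),
      (∀ (m : ℕ) (a b : Fin m), schmidtRank (ψfam m) (Set.Icc a b) ≤ c) →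
      ∃ C : ℝ, ∀ m : ℕ, 2 ≤ m → chiWidth (ψfam m) ≤ C := by
  refine ⟨interval_bound hn ψ, ?_⟩
  intro ψfam c hc
  refine ⟨Real.logb 2 ((max c 1 : ℕ) : ℝ), ?_⟩
  intro m hm
  have hb : (1 : ℝ) ≤ ((max c 1 : ℕ) : ℝ) := by exact_mod_cast le_max_right c 1
  refine le_trans (interval_bound hm (ψfam m)) ?_
  apply Real.sSup_le
  · rintro r ⟨p, q, hpq, hne, rfl⟩
    rcases Nat.eq_zero_or_pos (schmidtRank (ψfam m) (Set.Icc p q)) with h0 | hpos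
    · rw [h0]
      simpa using Real.logb_nonneg one_lt_two hb
    · apply Real.logb_le_logb_of_le one_lt_two (by exact_mod_cast hpos)
      exact_mod_cast le_trans (hc m p q) (le_max_left c 1)
  · exact Real.logb_nonneg one_lt_two hb
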